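/- arXiv:2210.00690 — 3 statements merged into one kernel-verified Lean document; each statement's English description precedes it below -/
import Mathlib

section
/- Let X be an integrable random vector in ℝ^d and λ > 0, and define the clipped vector X̃ = clip(X, λ) = min{1, λ/‖X‖}·X. If E[‖X‖^α] ≤ G^α for α ∈ (1,2], then ‖E[X] − E[X̃]‖ ≤ G^α λ^{1−α}. -/
/-! Clipping leaves `x` unchanged when `‖x‖ ≤ λ` and otherwise moves it by at most
`‖x‖ ≤ ‖x‖ ^ α λ ^ (1 - α)`; integrating this pointwise bound against the moment
bound gives the estimate on the bias. -/

open MeasureTheory Real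

/-- Clipping operator: `clip x λ = min{1, λ/‖x‖} • x` (with `clip 0 λ = 0`). -/
noncomputable def clip {E : Type*} [NormedAddCommGroup E] [InnerProductSpace ℝ E]
    (x : E) (lam : ℝ) : E := (min 1 (lam / ‖x‖)) • x

lemma Real.le_rpow_mul_rpow_one_sub {t lam α : ℝ} (hlam : 0 < lam) (hlt : lam ≤ t)
    (hα : 1 ≤ α) : t ≤ t ^ α * lam ^ (1 - α) := by
  have ht : 0 < t := hlam.trans_le hlt
  have hratio : 1 ≤ (t / lam) ^ (α - 1) :=
    one_le_rpow ((one_le_div hlam).mpr hlt) (sub_nonneg.mpr hα)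
  calc t = t * 1 := (mul_one t).symm
    _ ≤ t * (t / lam) ^ (α - 1) := mul_le_mul_of_nonneg_left hratio ht.le
    _ = t ^ α * lam ^ (1 - α) := by
      have hinv : lam ^ (1 - α) = (lam ^ (α - 1))⁻¹ := by rw [← rpow_neg hlam.le, neg_sub]
      rw [div_rpow ht.le hlam.le, rpow_sub_one ht.ne', hinv]
      field_simp

lemma min_one_div_mem_Icc {lam r : ℝ} (hlam : 0 ≤ lam) (hr : 0 ≤ r) :
    min 1 (lam / r) ∈ Set.Icc (0 : ℝ) 1 :=
  ⟨le_min zero_le_one (div_nonneg hlam hr), min_le_left _ _⟩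

section Clip

variable {E : Type*} [NormedAddCommGroup E] [InnerProductSpace ℝ E]

lemma clip_eq_self_of_norm_le {x : E} {lam : ℝ} (h : ‖x‖ ≤ lam) : clip x lam = x := by
  rcases eq_or_ne x 0 with rfl | hx
  · simp [clip]
  · rw [clip, min_eq_left ((one_le_div (norm_pos_iff.mpr hx)).mpr h), one_smul]

lemma norm_clip_le (x : E) {lam : ℝ} (hlam : 0 ≤ lam) : ‖clip x lam‖ ≤ ‖x‖ := by
  obtain ⟨h0, h1⟩ := min_one_div_mem_Icc hlam (norm_nonneg x)
  rw [clip, norm_smul, Real.norm_of_nonneg h0]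
  exact mul_le_of_le_one_left (norm_nonneg x) h1

lemma norm_sub_clip_le (x : E) {lam : ℝ} (hlam : 0 ≤ lam) : ‖x - clip x lam‖ ≤ ‖x‖ := by
  obtain ⟨h0, h1⟩ := min_one_div_mem_Icc hlam (norm_nonneg x)
  have hsub : x - clip x lam = (1 - min 1 (lam / ‖x‖)) • x := by rw [clip, sub_smul, one_smul]
  rw [hsub, norm_smul, Real.norm_of_nonneg (sub_nonneg.mpr h1)]
  exact mul_le_of_le_one_left (norm_nonneg x) (sub_le_self 1 h0)

lemma norm_sub_clip_le_rpow (x : E) {lam α : ℝ} (hlam : 0 < lam) (hα : 1 ≤ α) :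
    ‖x - clip x lam‖ ≤ ‖x‖ ^ α * lam ^ (1 - α) := by
  rcases le_total ‖x‖ lam with hle | hge
  · rw [clip_eq_self_of_norm_le hle, sub_self, norm_zero]
    positivity
  · exact (norm_sub_clip_le x hlam.le).trans (le_rpow_mul_rpow_one_sub hlam hge hα)

variable {Ω : Type*} [MeasurableSpace Ω] {μ : Measure Ω} {X : Ω → E}

lemma MeasureTheory.Integrable.clip (hX : Integrable X μ) {lam : ℝ} (hlam : 0 ≤ lam) :
    Integrable (fun ω => clip (X ω) lam) μ := by
  have hcoeff : AEStronglyMeasurable (fun ω => min 1 (lam / ‖X ω‖)) μ :=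
    aestronglyMeasurable_const.inf (aestronglyMeasurable_const.div₀ hX.1.norm)
  exact hX.mono (hcoeff.smul hX.1) (.of_forall fun ω => norm_clip_le (X ω) hlam)

lemma norm_integral_sub_integral_clip_le [CompleteSpace E] (hX : Integrable X μ) {lam α : ℝ}
    (hlam : 0 < lam) (hα : 1 ≤ α) (hmom : Integrable (fun ω => ‖X ω‖ ^ α) μ) :
    ‖(∫ ω, X ω ∂μ) - ∫ ω, clip (X ω) lam ∂μ‖ ≤ (∫ ω, ‖X ω‖ ^ α ∂μ) * lam ^ (1 - α) := by
  rw [← integral_sub hX (hX.clip hlam.le), ← integral_mul_const]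
  refine (norm_integral_le_integral_norm _).trans (integral_mono_of_nonneg ?_ ?_ ?_)
  · exact .of_forall fun ω => norm_nonneg _
  · exact hmom.mul_const _
  · exact .of_forall fun ω => norm_sub_clip_le_rpow (X ω) hlam hα

end Clip

theorem clipping_bias_le_general {d : ℕ} {Ω : Type*} [MeasurableSpace Ω]
    (μ : Measure Ω)
    (X : Ω → EuclideanSpace ℝ (Fin d)) (hXint : Integrable X μ)
    (α G lam : ℝ) (hα1 : 1 < α) (hlam : 0 < lam)
    (hmomInt : Integrable (fun ω => ‖X ω‖ ^ α) μ)
    (hmom : ∫ ω, ‖X ω‖ ^ α ∂μ ≤ G ^ α) :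
    ‖(∫ ω, X ω ∂μ) - ∫ ω, clip (X ω) lam ∂μ‖ ≤ G ^ α * lam ^ (1 - α) :=
  (norm_integral_sub_integral_clip_le hXint hlam hα1.le hmomInt).trans
    (mul_le_mul_of_nonneg_right hmom (rpow_nonneg hlam.le _))

/-- Bias of clipping: `‖E[X] − E[clip(X,λ)]‖ ≤ G^α λ^{1-α}`. -/
theorem clipping_bias_le {d : ℕ} {Ω : Type*} [MeasurableSpace Ω]
    (μ : Measure Ω) [IsProbabilityMeasure μ]
    (X : Ω → EuclideanSpace ℝ (Fin d)) (hX : Measurable X) (hXint : Integrable X μ)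
    (α G lam : ℝ) (hα1 : 1 < α) (hα2 : α ≤ 2) (hG : 0 ≤ G) (hlam : 0 < lam)
    (hmomInt : Integrable (fun ω => ‖X ω‖ ^ α) μ)
    (hmom : ∫ ω, ‖X ω‖ ^ α ∂μ ≤ G ^ α) :
    ‖(∫ ω, X ω ∂μ) - ∫ ω, clip (X ω) lam ∂μ‖ ≤ G ^ α * lam ^ (1 - α) :=
  clipping_bias_le_general μ X hXint α G lam hα1 hlam hmomInt hmom
end

section
/- Let x, x* ∈ ℝ^d, η > 0, and let Δ̃ be a random vector with E[‖Δ̃‖²] ≤ S. Let f be μ-strongly convex with minimizer x*, and let g = ∇f(x), K > 0. Then E[‖x − ηΔ̃ − x*‖²] ≤ (1 − (μηK)/2)‖x − x*‖² + η²S + (8ηK/μ)·‖(1/K)E[Δ̃] − g‖² − 2ηK( f(x) − f(x*) ). -/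
open MeasureTheory RealInnerProductSpace

/-!
Write `v = x - x*`. Expanding the square, `E‖v - ηΔ̃‖² = ‖v‖² - 2η⟪v, E Δ̃⟫ + η² E‖Δ̃‖²`, and the
mean splits as `E Δ̃ = K (∇f(x) + b)` with bias `b = (1/K) E Δ̃ - ∇f(x)`. Strong convexity between
`x` and `x*` bounds `-⟪v, ∇f(x)⟫` by `-(f(x) - f(x*)) - (μ/2)‖v‖²`, and Young's inequality with
weight `μ/4` absorbs the bias term into a quarter of that contraction.
-/

section InnerProductSpace

variable {E : Type*} [NormedAddCommGroup E] [InnerProductSpace ℝ E]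

lemma two_mul_inner_le_mul_norm_sq_add {ε : ℝ} (hε : 0 < ε) (a b : E) :
    2 * ⟪a, b⟫ ≤ ε * ‖a‖ ^ 2 + ε⁻¹ * ‖b‖ ^ 2 :=
  calc 2 * ⟪a, b⟫ ≤ 2 * ‖a‖ * ‖b‖ := by
        rw [mul_assoc]; exact mul_le_mul_of_nonneg_left (real_inner_le_norm a b) zero_le_two
    _ ≤ ε * ‖a‖ ^ 2 + ε⁻¹ * ‖b‖ ^ 2 := two_mul_le_add_mul_sq hε

lemma sub_add_norm_sq_le_inner_of_strongConvex {f : E → ℝ} {g : E → E} {μ : ℝ}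
    (hsc : ∀ a b, f a + ⟪g a, b - a⟫ + μ / 2 * ‖b - a‖ ^ 2 ≤ f b) (x y : E) :
    f x - f y + μ / 2 * ‖x - y‖ ^ 2 ≤ ⟪x - y, g x⟫ := by
  have h := hsc x y
  rw [← neg_sub x y, inner_neg_right, norm_neg, real_inner_comm] at h
  linarith

variable [CompleteSpace E] {Ω : Type*} [MeasurableSpace Ω] {μ : Measure Ω} [IsProbabilityMeasure μ]

lemma integral_norm_sub_smul_sq {X : Ω → E} (hX : Integrable X μ)
    (hX2 : Integrable (fun ω => ‖X ω‖ ^ 2) μ) (v : E) (c : ℝ) :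
    ∫ ω, ‖v - c • X ω‖ ^ 2 ∂μ
      = ‖v‖ ^ 2 - 2 * c * ⟪v, ∫ ω, X ω ∂μ⟫ + c ^ 2 * ∫ ω, ‖X ω‖ ^ 2 ∂μ := by
  have hexpand : ∀ ω, ‖v - c • X ω‖ ^ 2 = ‖v‖ ^ 2 - 2 * c * ⟪v, X ω⟫ + c ^ 2 * ‖X ω‖ ^ 2 := by
    intro ω
    rw [norm_sub_sq_real, real_inner_smul_right, norm_smul, mul_pow, Real.norm_eq_abs, sq_abs]
    ring
  have hinner : Integrable (fun ω => 2 * c * ⟪v, X ω⟫) μ := (hX.const_inner v).const_mul _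
  have hlin : Integrable (fun ω => ‖v‖ ^ 2 - 2 * c * ⟪v, X ω⟫) μ := (integrable_const _).sub hinner
  simp_rw [hexpand]
  rw [integral_add hlin (hX2.const_mul _),
    integral_sub (integrable_const _) hinner, integral_const, integral_const_mul,
    integral_const_mul, integral_inner hX, probReal_univ, one_smul]

end InnerProductSpace

theorem one_step_strongly_convex_general {d : ℕ} {Ω : Type*} [MeasurableSpace Ω]
    (μ : Measure Ω) [IsProbabilityMeasure μ]
    (f : EuclideanSpace ℝ (Fin d) → ℝ)
    (g : EuclideanSpace ℝ (Fin d) → EuclideanSpace ℝ (Fin d)) (μs : ℝ) (hμs : 0 < μs)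
    (hsc : ∀ a b, f a + ⟪g a, b - a⟫ + μs / 2 * ‖b - a‖ ^ 2 ≤ f b)
    (x xs : EuclideanSpace ℝ (Fin d))
    (η K S : ℝ) (hη : 0 < η) (hK : 0 < K)
    (Δ : Ω → EuclideanSpace ℝ (Fin d))
    (hΔint : Integrable Δ μ) (hΔ2int : Integrable (fun ω => ‖Δ ω‖ ^ 2) μ)
    (hS : ∫ ω, ‖Δ ω‖ ^ 2 ∂μ ≤ S) :
    ∫ ω, ‖x - η • Δ ω - xs‖ ^ 2 ∂μ ≤
      (1 - μs * η * K / 2) * ‖x - xs‖ ^ 2 + η ^ 2 * S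
        + 8 * η * K / μs * ‖(1 / K) • (∫ ω, Δ ω ∂μ) - g x‖ ^ 2
        - 2 * η * K * (f x - f xs) := by
  set v := x - xs
  set b := (1 / K) • (∫ ω, Δ ω ∂μ) - g x
  have hexpand : ∫ ω, ‖x - η • Δ ω - xs‖ ^ 2 ∂μ
      = ‖v‖ ^ 2 - 2 * η * K * (⟪v, g x⟫ + ⟪v, b⟫) + η ^ 2 * ∫ ω, ‖Δ ω‖ ^ 2 ∂μ := by
    have hmean : ∫ ω, Δ ω ∂μ = K • (g x + b) := by
      rw [add_sub_cancel, smul_smul, mul_one_div_cancel hK.ne', one_smul]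
    simp_rw [sub_right_comm x _ xs]
    rw [integral_norm_sub_smul_sq hΔint hΔ2int, hmean, inner_smul_right, inner_add_right]
    ring
  have hconvex : f x - f xs + μs / 2 * ‖v‖ ^ 2 ≤ ⟪v, g x⟫ :=
    sub_add_norm_sq_le_inner_of_strongConvex hsc x xs
  have hyoung : 2 * -⟪v, b⟫ ≤ μs / 4 * ‖v‖ ^ 2 + 4 / μs * ‖b‖ ^ 2 := by
    have h := two_mul_inner_le_mul_norm_sq_add (by positivity : 0 < μs / 4) v (-b)
    rwa [inner_neg_right, norm_neg, inv_div] at h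
  have hηK : 0 < η * K := mul_pos hη hK
  rw [hexpand]
  linear_combination mul_le_mul_of_nonneg_left hS (sq_nonneg η)
    + 2 * mul_le_mul_of_nonneg_left hconvex hηK.le + mul_le_mul_of_nonneg_left hyoung hηK.le
    + 1 / 4 * mul_nonneg (mul_pos hηK hμs).le (sq_nonneg ‖v‖)
    + 4 * mul_nonneg (div_pos hηK hμs).le (sq_nonneg ‖b‖)

/-- One-step recursion in the strongly convex analysis of FAT-Clipping:
`E‖x − ηΔ̃ − x*‖² ≤ (1 − μηK/2)‖x − x*‖² + η²S + (8ηK/μ)‖(1/K)E[Δ̃] − ∇f(x)‖²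
  − 2ηK(f(x) − f(x*))`. -/
theorem one_step_strongly_convex {d : ℕ} {Ω : Type*} [MeasurableSpace Ω]
    (μ : Measure Ω) [IsProbabilityMeasure μ]
    (f : EuclideanSpace ℝ (Fin d) → ℝ)
    (g : EuclideanSpace ℝ (Fin d) → EuclideanSpace ℝ (Fin d)) (μs : ℝ) (hμs : 0 < μs)
    (hgrad : ∀ z, HasGradientAt f (g z) z)
    (hsc : ∀ a b, f a + ⟪g a, b - a⟫ + μs / 2 * ‖b - a‖ ^ 2 ≤ f b)
    (x xs : EuclideanSpace ℝ (Fin d)) (hmin : ∀ y, f xs ≤ f y)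
    (η K S : ℝ) (hη : 0 < η) (hK : 0 < K)
    (Δ : Ω → EuclideanSpace ℝ (Fin d)) (hΔmeas : Measurable Δ)
    (hΔint : Integrable Δ μ) (hΔ2int : Integrable (fun ω => ‖Δ ω‖ ^ 2) μ)
    (hS : ∫ ω, ‖Δ ω‖ ^ 2 ∂μ ≤ S) :
    ∫ ω, ‖x - η • Δ ω - xs‖ ^ 2 ∂μ ≤
      (1 - μs * η * K / 2) * ‖x - xs‖ ^ 2 + η ^ 2 * S
        + 8 * η * K / μs * ‖(1 / K) • (∫ ω, Δ ω ∂μ) - g x‖ ^ 2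
        - 2 * η * K * (f x - f xs) :=
  one_step_strongly_convex_general μ f g μs hμs hsc x xs η K S hη hK Δ hΔint hΔ2int hS
end

section
/- Let f : ℝ^d → ℝ be differentiable with L-Lipschitz gradient, let x ∈ ℝ^d, and let Δ̃ be a random vector in ℝ^d. Let c > 0 satisfy cL ≤ 1 with c = ηK for step size η > 0 and K ≥ 1 (i.e. ηKL ≤ 1). Then for x⁺ = x − ηΔ̃: E[f(x⁺)] − f(x) ≤ −(ηK/2)‖∇f(x)‖² + (ηK/2)‖∇f(x) − (1/K)E[Δ̃]‖² + (Lη²/2)·E[‖Δ̃ − E[Δ̃]‖²]. -/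
/-!
Apply the descent lemma `f y ≤ f x + ⟪∇f x, y - x⟫ + (L/2)‖y - x‖²` pointwise at
`y = x - ηΔ̃` and integrate. Splitting `E‖Δ̃‖² = ‖E Δ̃‖² + E‖Δ̃ - E Δ̃‖²` and polarizing
`-η⟪∇f x, E Δ̃⟫` around `(1/K) E Δ̃` leaves the extra term `(Lη²/2 - η/(2K))‖E Δ̃‖²`,
which is nonpositive because `ηKL ≤ 1`.
-/

open MeasureTheory RealInnerProductSpace

section InnerProductSpace

variable {E : Type*} [NormedAddCommGroup E] [InnerProductSpace ℝ E]

lemma real_inner_eq_norm_sq_sub_norm_sub_smul_sq {K : ℝ} (hK : K ≠ 0) (a b : E) :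
    ⟪a, b⟫ = K / 2 * (‖a‖ ^ 2 - ‖a - (1 / K) • b‖ ^ 2) + ‖b‖ ^ 2 / (2 * K) := by
  rw [norm_sub_sq_real, real_inner_smul_right, norm_smul, mul_pow, Real.norm_eq_abs, sq_abs]
  field_simp
  ring

variable {f : E → ℝ} {g : E → E} {L : ℝ}

lemma inner_sub_gradient_le_of_lipschitz (hlip : ∀ a b, ‖g a - g b‖ ≤ L * ‖a - b‖)
    (x v : E) {t : ℝ} (ht : 0 ≤ t) :
    ⟪g (x + t • v) - g x, v⟫ ≤ L * t * ‖v‖ ^ 2 :=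
  calc ⟪g (x + t • v) - g x, v⟫ ≤ ‖g (x + t • v) - g x‖ * ‖v‖ := real_inner_le_norm _ _
    _ ≤ L * ‖(x + t • v) - x‖ * ‖v‖ := by gcongr; exact hlip _ _
    _ = L * t * ‖v‖ ^ 2 := by
      rw [add_sub_cancel_left, norm_smul, Real.norm_of_nonneg ht]; ring

variable [CompleteSpace E]

lemma le_add_inner_add_sq_of_lipschitz_gradient (hgrad : ∀ z, HasGradientAt f (g z) z)
    (hlip : ∀ a b, ‖g a - g b‖ ≤ L * ‖a - b‖) (x y : E) :
    f y ≤ f x + ⟪g x, y - x⟫ + L / 2 * ‖y - x‖ ^ 2 := by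
  set v := y - x
  -- `ψ` has derivative `⟪g (x + t v) - g x, v⟫ - L t ‖v‖² ≤ 0`, so `ψ 1 ≤ ψ 0`.
  let ψ : ℝ → ℝ := fun t => f (x + t • v) - t * ⟪g x, v⟫ - L * ‖v‖ ^ 2 * t ^ 2 / 2
  have hψ : ∀ t, HasDerivAt ψ (⟪g (x + t • v), v⟫ - ⟪g x, v⟫ - L * ‖v‖ ^ 2 * t) t := by
    intro t
    have hline : HasDerivAt (fun t : ℝ => x + t • v) v t := by
      simpa using ((hasDerivAt_id t).smul_const v).const_add x
    have hf : HasDerivAt (fun t : ℝ => f (x + t • v)) ⟪g (x + t • v), v⟫ t := by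
      have h := (hgrad (x + t • v)).hasFDerivAt.comp_hasDerivAt t hline
      simp only [InnerProductSpace.toDual_apply_apply] at h
      exact h
    have hsq : HasDerivAt (fun t : ℝ => L * ‖v‖ ^ 2 * t ^ 2 / 2) (L * ‖v‖ ^ 2 * t) t := by
      refine (((hasDerivAt_pow 2 t).const_mul (L * ‖v‖ ^ 2)).div_const 2).congr_deriv ?_
      ring
    exact (hf.sub ((hasDerivAt_id t).mul_const _)).sub hsq |>.congr_deriv (by simp)
  have hanti : AntitoneOn ψ (Set.Icc 0 1) := by
    refine antitoneOn_of_deriv_nonpos (convex_Icc 0 1)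
      (fun t _ => (hψ t).continuousAt.continuousWithinAt)
      (fun t _ => (hψ t).differentiableAt.differentiableWithinAt) fun t ht => ?_
    rw [interior_Icc] at ht
    rw [(hψ t).deriv, ← inner_sub_left]
    linarith [inner_sub_gradient_le_of_lipschitz hlip x v ht.1.le]
  have h01 := hanti (Set.left_mem_Icc.2 zero_le_one) (Set.right_mem_Icc.2 zero_le_one)
    zero_le_one
  simp only [ψ, zero_smul, add_zero, one_smul, add_sub_cancel, v] at h01
  linarith

variable {Ω : Type*} [MeasurableSpace Ω] {μ : Measure Ω} [IsProbabilityMeasure μ]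

lemma integral_norm_sub_integral_sq {X : Ω → E} (hX : Integrable X μ)
    (hX2 : Integrable (fun ω => ‖X ω‖ ^ 2) μ) :
    ∫ ω, ‖X ω - ∫ ω', X ω' ∂μ‖ ^ 2 ∂μ = (∫ ω, ‖X ω‖ ^ 2 ∂μ) - ‖∫ ω, X ω ∂μ‖ ^ 2 := by
  set m := ∫ ω, X ω ∂μ
  have hcross : Integrable (fun ω => 2 * ⟪X ω, m⟫) μ := (hX.inner_const m).const_mul 2
  have hdiff : Integrable (fun ω => ‖X ω‖ ^ 2 - 2 * ⟪X ω, m⟫) μ := hX2.sub hcross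
  have hmean : ∫ ω, ⟪X ω, m⟫ ∂μ = ‖m‖ ^ 2 := by
    simp_rw [real_inner_comm m]
    rw [integral_inner hX, real_inner_self_eq_norm_sq]
  simp_rw [norm_sub_sq_real]
  rw [integral_add hdiff (integrable_const _), integral_sub hX2 hcross,
    integral_const_mul, hmean, integral_const, probReal_univ, one_smul]
  ring

lemma integral_le_of_lipschitz_gradient (hgrad : ∀ z, HasGradientAt f (g z) z)
    (hlip : ∀ a b, ‖g a - g b‖ ≤ L * ‖a - b‖)
    (x : E) (η : ℝ) {Δ : Ω → E} (hΔ : Integrable Δ μ)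
    (hΔ2 : Integrable (fun ω => ‖Δ ω‖ ^ 2) μ)
    (hf : Integrable (fun ω => f (x - η • Δ ω)) μ) :
    ∫ ω, f (x - η • Δ ω) ∂μ ≤
      f x - η * ⟪g x, ∫ ω, Δ ω ∂μ⟫ + L * η ^ 2 / 2 * ∫ ω, ‖Δ ω‖ ^ 2 ∂μ := by
  have hpointwise : ∀ ω, f (x - η • Δ ω) ≤
      f x - η * ⟪g x, Δ ω⟫ + L * η ^ 2 / 2 * ‖Δ ω‖ ^ 2 := by
    intro ω
    have h := le_add_inner_add_sq_of_lipschitz_gradient hgrad hlip x (x - η • Δ ω)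
    rw [sub_sub_cancel_left, inner_neg_right, real_inner_smul_right, norm_neg, norm_smul,
      mul_pow, Real.norm_eq_abs, sq_abs] at h
    linarith
  have hinner : Integrable (fun ω => η * ⟪g x, Δ ω⟫) μ := (hΔ.const_inner _).const_mul η
  have hlinear : Integrable (fun ω => f x - η * ⟪g x, Δ ω⟫) μ := (integrable_const _).sub hinner
  calc ∫ ω, f (x - η • Δ ω) ∂μ
      ≤ ∫ ω, (f x - η * ⟪g x, Δ ω⟫ + L * η ^ 2 / 2 * ‖Δ ω‖ ^ 2) ∂μ :=
        integral_mono hf (hlinear.add (hΔ2.const_mul _)) hpointwise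
    _ = f x - η * ⟪g x, ∫ ω, Δ ω ∂μ⟫ + L * η ^ 2 / 2 * ∫ ω, ‖Δ ω‖ ^ 2 ∂μ := by
        rw [integral_add hlinear (hΔ2.const_mul _),
          integral_sub (integrable_const _) hinner, integral_const, integral_const_mul,
          integral_const_mul, integral_inner hΔ, probReal_univ, one_smul]

end InnerProductSpace

theorem one_round_descent_nonconvex_general {d : ℕ} {Ω : Type*} [MeasurableSpace Ω]
    (μ : Measure Ω) [IsProbabilityMeasure μ]
    (f : EuclideanSpace ℝ (Fin d) → ℝ)
    (g : EuclideanSpace ℝ (Fin d) → EuclideanSpace ℝ (Fin d)) (L : ℝ)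
    (hgrad : ∀ z, HasGradientAt f (g z) z)
    (hlip : ∀ a b, ‖g a - g b‖ ≤ L * ‖a - b‖)
    (x : EuclideanSpace ℝ (Fin d)) (η K : ℝ) (hη : 0 < η) (hK : 1 ≤ K)
    (hηKL : η * K * L ≤ 1)
    (Δ : Ω → EuclideanSpace ℝ (Fin d))
    (hΔint : Integrable Δ μ) (hΔ2int : Integrable (fun ω => ‖Δ ω‖ ^ 2) μ)
    (hfint : Integrable (fun ω => f (x - η • Δ ω)) μ) :
    (∫ ω, f (x - η • Δ ω) ∂μ) - f x ≤
      -(η * K / 2) * ‖g x‖ ^ 2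
        + η * K / 2 * ‖g x - (1 / K) • (∫ ω, Δ ω ∂μ)‖ ^ 2
        + L * η ^ 2 / 2 * ∫ ω, ‖Δ ω - ∫ ω', Δ ω' ∂μ‖ ^ 2 ∂μ := by
  have hK0 : 0 < K := one_pos.trans_le hK
  have hdescent := integral_le_of_lipschitz_gradient hgrad hlip x η hΔint hΔ2int hfint
  have hvar := integral_norm_sub_integral_sq hΔint hΔ2int
  set m := ∫ ω, Δ ω ∂μ
  have hpolar : η * ⟪g x, m⟫ =
      η * K / 2 * (‖g x‖ ^ 2 - ‖g x - (1 / K) • m‖ ^ 2) + η / (2 * K) * ‖m‖ ^ 2 := by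
    rw [real_inner_eq_norm_sq_sub_norm_sub_smul_sq hK0.ne']
    field_simp
  have hcoef : L * η ^ 2 / 2 * ‖m‖ ^ 2 ≤ η / (2 * K) * ‖m‖ ^ 2 := by
    refine mul_le_mul_of_nonneg_right ?_ (sq_nonneg _)
    rw [div_le_div_iff₀ two_pos (by positivity)]
    nlinarith
  rw [hvar]
  linarith

/-- One-round descent inequality in the nonconvex analysis of FAT-Clipping:
for `x⁺ = x − ηΔ̃` with `ηKL ≤ 1`,
`E[f(x⁺)] − f(x) ≤ −(ηK/2)‖∇f(x)‖² + (ηK/2)‖∇f(x) − (1/K)E[Δ̃]‖²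
  + (Lη²/2)E‖Δ̃ − E[Δ̃]‖²`. -/
theorem one_round_descent_nonconvex {d : ℕ} {Ω : Type*} [MeasurableSpace Ω]
    (μ : Measure Ω) [IsProbabilityMeasure μ]
    (f : EuclideanSpace ℝ (Fin d) → ℝ)
    (g : EuclideanSpace ℝ (Fin d) → EuclideanSpace ℝ (Fin d)) (L : ℝ) (hL : 0 ≤ L)
    (hgrad : ∀ z, HasGradientAt f (g z) z)
    (hlip : ∀ a b, ‖g a - g b‖ ≤ L * ‖a - b‖)
    (x : EuclideanSpace ℝ (Fin d)) (η K : ℝ) (hη : 0 < η) (hK : 1 ≤ K)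
    (hηKL : η * K * L ≤ 1)
    (Δ : Ω → EuclideanSpace ℝ (Fin d)) (hΔmeas : Measurable Δ)
    (hΔint : Integrable Δ μ) (hΔ2int : Integrable (fun ω => ‖Δ ω‖ ^ 2) μ)
    (hfint : Integrable (fun ω => f (x - η • Δ ω)) μ) :
    (∫ ω, f (x - η • Δ ω) ∂μ) - f x ≤
      -(η * K / 2) * ‖g x‖ ^ 2
        + η * K / 2 * ‖g x - (1 / K) • (∫ ω, Δ ω ∂μ)‖ ^ 2
        + L * η ^ 2 / 2 * ∫ ω, ‖Δ ω - ∫ ω', Δ ω' ∂μ‖ ^ 2 ∂μ :=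
  one_round_descent_nonconvex_general μ f g L hgrad hlip x η K hη hK hηKL Δ hΔint hΔ2int hfint
end
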